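/- arXiv:1411.7614 — 6 statements merged into one kernel-verified Lean document; each statement's English description precedes it below -/
import Mathlib

section
/- Let G be a bipartite graph with a skew-symmetric weight function w on its directed edges such that every cycle of G has nonzero circulation (the sum of weights of edges along the cycle in a fixed orientation). Then the induced weight function on undirected edges is isolating: G has at most one minimum-weight perfect matching. -/
/-!
Suppose two minimum-weight perfect matchings `M₁ ≠ M₂` differ at `x ∈ V₁`. Following
`M₁`-edges and `M₂`-edges alternately from `x` runs through the orbit of `x` under `M₂ ∘ M₁`
and closes up into a cycle `C`. By skew-symmetry the circulation of `C` is the `M₁`-weight minus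
the `M₂`-weight of the vertices of `C` in `V₁`. Exchanging `M₁` and `M₂` on the vertices of `C`
gives perfect matchings again, so minimality of both forces these two weights to agree, and `C`
has circulation zero.
-/

open Finset Function

lemma sum_range_iterate_succ {α M : Type*} [AddCommGroup M] {f : α → α} {x : α} {k : ℕ}
    (hper : f^[k] x = x) (g : α → M) :
    ∑ i ∈ range k, g (f^[i + 1] x) = ∑ i ∈ range k, g (f^[i] x) := by
  have h := sum_range_succ' (fun i => g (f^[i] x)) k
  rw [sum_range_succ, hper, iterate_zero_apply] at h
  exact (add_right_cancel h).symm

namespace SimpleGraph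

variable {V : Type*} {G : SimpleGraph V}

def Walk.circulation (w : V → V → ℤ) {u v : V} (p : G.Walk u v) : ℤ :=
  (p.darts.map fun d => w d.toProd.1 d.toProd.2).sum

@[simp] lemma Walk.circulation_cons (w : V → V → ℤ) {u v x : V} (h : G.Adj u v)
    (p : G.Walk v x) : (Walk.cons h p).circulation w = w u v + p.circulation w := by
  simp [Walk.circulation]

section AlternatingWalk

variable {M₁ M₂ : V → V} (h₁ : ∀ v, G.Adj v (M₁ v)) (h₂ : ∀ v, G.Adj v (M₂ v))

def alternatingWalk : (n : ℕ) → (x : V) → G.Walk x ((M₂ ∘ M₁)^[n] x)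
  | 0, _ => .nil
  | n + 1, x => .cons (h₁ x) (.cons (h₂ (M₁ x)) (alternatingWalk n (M₂ (M₁ x))))

lemma length_alternatingWalk (n : ℕ) (x : V) :
    (alternatingWalk h₁ h₂ n x).length = 2 * n := by
  induction n generalizing x with
  | zero => rfl
  | succ n ih => simp [alternatingWalk, ih]; omega

lemma support_alternatingWalk (n : ℕ) (x : V) :
    (alternatingWalk h₁ h₂ n x).support =
      (List.range n).flatMap (fun i => [(M₂ ∘ M₁)^[i] x, M₁ ((M₂ ∘ M₁)^[i] x)]) ++
        [(M₂ ∘ M₁)^[n] x] := by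
  induction n generalizing x with
  | zero => rfl
  | succ n ih => simp [alternatingWalk, ih, List.range_succ_eq_map, List.flatMap_map]

lemma circulation_alternatingWalk (w : V → V → ℤ) (n : ℕ) (x : V) :
    (alternatingWalk h₁ h₂ n x).circulation w =
      ∑ i ∈ range n, (w ((M₂ ∘ M₁)^[i] x) (M₁ ((M₂ ∘ M₁)^[i] x)) +
        w (M₁ ((M₂ ∘ M₁)^[i] x)) ((M₂ ∘ M₁)^[i + 1] x)) := by
  induction n generalizing x with
  | zero => rfl
  | succ n ih =>
    simp only [alternatingWalk, Walk.circulation_cons, ih, sum_range_succ', iterate_succ_apply,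
      iterate_zero_apply, comp_apply]
    ring

lemma circulation_copy_alternatingWalk (w : V → V → ℤ) (hskew : ∀ u v, w u v = -w v u)
    (hM₂ : ∀ v, M₂ (M₂ v) = v) {k : ℕ} {x : V} (hper : (M₂ ∘ M₁)^[k] x = x) :
    ((alternatingWalk h₁ h₂ k x).copy rfl hper).circulation w =
      ∑ i ∈ range k, w ((M₂ ∘ M₁)^[i] x) (M₁ ((M₂ ∘ M₁)^[i] x)) -
        ∑ i ∈ range k, w ((M₂ ∘ M₁)^[i] x) (M₂ ((M₂ ∘ M₁)^[i] x)) := by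
  have hback : ∀ i, w (M₁ ((M₂ ∘ M₁)^[i] x)) ((M₂ ∘ M₁)^[i + 1] x) =
      -w ((M₂ ∘ M₁)^[i + 1] x) (M₂ ((M₂ ∘ M₁)^[i + 1] x)) := fun i => by
    rw [iterate_succ_apply', comp_apply, hM₂, hskew]
  rw [Walk.circulation, Walk.darts_copy, ← Walk.circulation, circulation_alternatingWalk,
    sum_congr rfl fun i _ => congrArg _ (hback i), sum_add_distrib, sum_neg_distrib,
    sum_range_iterate_succ hper fun v => w v (M₂ v), sub_eq_add_neg]

lemma isCycle_alternatingWalk {k : ℕ} {x : V} (hk : 2 ≤ k) (hper : (M₂ ∘ M₁)^[k] x = x)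
    (hinj : Set.InjOn (fun i => (M₂ ∘ M₁)^[i] x) (Set.Iio k)) (hM₁ : Injective M₁)
    (hne : ∀ i j, M₁ ((M₂ ∘ M₁)^[i] x) ≠ (M₂ ∘ M₁)^[j] x) :
    ((alternatingWalk h₁ h₂ k x).copy rfl hper).IsCycle := by
  have hlen : ((alternatingWalk h₁ h₂ k x).copy rfl hper).length = 2 * k := by
    rw [Walk.length_copy, length_alternatingWalk]
  rw [Walk.isCycle_iff_isPath_tail_and_le_length, hlen]
  refine ⟨Walk.IsPath.mk' ?_, by omega⟩
  rw [Walk.support_tail_of_not_nil _ (Walk.not_nil_iff_lt_length.2 (by omega)),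
    (Walk.tail_support_perm_dropLast_support _).nodup_iff, Walk.support_copy,
    support_alternatingWalk, List.dropLast_concat, List.nodup_flatMap]
  refine ⟨fun i _ => by simpa using (hne i i).symm,
    List.nodup_range.pairwise_of_forall_ne fun i hi j hj hij => ?_⟩
  have hij' : (M₂ ∘ M₁)^[i] x ≠ (M₂ ∘ M₁)^[j] x := fun h =>
    hij (hinj (by simpa using hi) (by simpa using hj) h)
  simp [hij'.symm, hM₁.ne hij'.symm, hne j i, (hne i j).symm]

end AlternatingWalk

end SimpleGraph

open SimpleGraph

section PerfectMatchingFun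

variable {V : Type*} {G : SimpleGraph V}

def IsPerfectMatchingFun (G : SimpleGraph V) (M : V → V) : Prop :=
  (∀ v, M (M v) = v) ∧ ∀ v, G.Adj v (M v)

namespace IsPerfectMatchingFun

variable {M N : V → V}

lemma injective (hM : IsPerfectMatchingFun G M) : Injective M :=
  Involutive.injective hM.1

lemma piecewise [DecidableEq V] (hM : IsPerfectMatchingFun G M) (hN : IsPerfectMatchingFun G N)
    {S : Finset V} (hSM : ∀ v ∈ S, M v ∈ S) (hSN : ∀ v ∈ S, N v ∈ S) :
    IsPerfectMatchingFun G (S.piecewise N M) := by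
  refine ⟨fun v => ?_, fun v => ?_⟩
  · by_cases hv : v ∈ S
    · rw [S.piecewise_eq_of_mem _ _ hv, S.piecewise_eq_of_mem _ _ (hSN v hv), hN.1]
    · have hMv : M v ∉ S := fun h => hv (hM.1 v ▸ hSM _ h)
      rw [S.piecewise_eq_of_notMem _ _ hv, S.piecewise_eq_of_notMem _ _ hMv, hM.1]
  · by_cases hv : v ∈ S
    · simpa [hv] using hN.2 v
    · simpa [hv] using hM.2 v

end IsPerfectMatchingFun

variable {V₁ : Set V}

lemma mapsTo_comp_of_bipartite (hbip : ∀ u v, G.Adj u v → (u ∈ V₁ ↔ v ∉ V₁)) {M₁ M₂ : V → V}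
    (hM₁ : ∀ v, G.Adj v (M₁ v)) (hM₂ : ∀ v, G.Adj v (M₂ v)) :
    Set.MapsTo (M₂ ∘ M₁) V₁ V₁ := fun v hv => by
  have h₁ := (hbip _ _ (hM₁ v)).1 hv
  by_contra h₂
  exact h₁ ((hbip _ _ (hM₂ (M₁ v))).2 h₂)

lemma exists_mem_ne_of_ne (hbip : ∀ u v, G.Adj u v → (u ∈ V₁ ↔ v ∉ V₁)) {M₁ M₂ : V → V}
    (hM₁ : IsPerfectMatchingFun G M₁) (hM₂ : IsPerfectMatchingFun G M₂) (hne : M₁ ≠ M₂) :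
    ∃ v ∈ V₁, M₁ v ≠ M₂ v := by
  obtain ⟨v, hv⟩ := ne_iff.1 hne
  by_cases hvV₁ : v ∈ V₁
  · exact ⟨v, hvV₁, hv⟩
  refine ⟨M₁ v, by simpa [hvV₁] using hbip _ _ (hM₁.2 v), fun h => hv ?_⟩
  rw [hM₁.1] at h
  exact (hM₂.1 (M₁ v)).symm.trans (congrArg M₂ h.symm)

open Classical in
noncomputable def matchingWeight [Fintype V] (V₁ : Set V) (w : V → V → ℤ) (M : V → V) : ℤ :=
  ∑ v, if v ∈ V₁ then w v (M v) else 0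

open Classical in
lemma matchingWeight_piecewise [Fintype V] (w : V → V → ℤ) (S : Finset V) (M N : V → V) :
    matchingWeight V₁ w (S.piecewise N M) =
      matchingWeight V₁ w M + ∑ v ∈ S with v ∈ V₁, (w v (N v) - w v (M v)) := by
  rw [matchingWeight, matchingWeight, sum_filter, ← Fintype.sum_ite_mem S, ← sum_add_distrib]
  refine sum_congr rfl fun v _ => ?_
  by_cases hS : v ∈ S <;> by_cases hV : v ∈ V₁ <;> simp [hS, hV]

def IsMinWeightPerfectMatchingFun [Fintype V] (G : SimpleGraph V) (V₁ : Set V)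
    (w : V → V → ℤ) (M : V → V) : Prop :=
  IsPerfectMatchingFun G M ∧
    ∀ M', IsPerfectMatchingFun G M' → matchingWeight V₁ w M ≤ matchingWeight V₁ w M'

open Classical in
lemma IsMinWeightPerfectMatchingFun.sum_filter_eq [Fintype V] {w : V → V → ℤ} {M N : V → V}
    (hM : IsMinWeightPerfectMatchingFun G V₁ w M) (hN : IsMinWeightPerfectMatchingFun G V₁ w N)
    {S : Finset V} (hSM : ∀ v ∈ S, M v ∈ S) (hSN : ∀ v ∈ S, N v ∈ S) :
    ∑ v ∈ S with v ∈ V₁, w v (M v) = ∑ v ∈ S with v ∈ V₁, w v (N v) := by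
  have hMN := hM.2 _ (hM.1.piecewise hN.1 hSM hSN)
  have hNM := hN.2 _ (hN.1.piecewise hM.1 hSN hSM)
  rw [matchingWeight_piecewise, sum_sub_distrib] at hMN hNM
  linarith

open Classical in
lemma IsMinWeightPerfectMatchingFun.sum_range_minimalPeriod_eq [Fintype V] {w : V → V → ℤ}
    (hbip : ∀ u v, G.Adj u v → (u ∈ V₁ ↔ v ∉ V₁)) {M₁ M₂ : V → V}
    (hmin₁ : IsMinWeightPerfectMatchingFun G V₁ w M₁)
    (hmin₂ : IsMinWeightPerfectMatchingFun G V₁ w M₂) {x : V} (hx : x ∈ V₁) :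
    ∑ i ∈ range (minimalPeriod (M₂ ∘ M₁) x), w ((M₂ ∘ M₁)^[i] x) (M₁ ((M₂ ∘ M₁)^[i] x)) =
      ∑ i ∈ range (minimalPeriod (M₂ ∘ M₁) x), w ((M₂ ∘ M₁)^[i] x) (M₂ ((M₂ ∘ M₁)^[i] x)) := by
  have hM₁ := hmin₁.1
  have hM₂ := hmin₂.1
  set f := M₂ ∘ M₁
  set k := minimalPeriod f x
  have hk : 0 < k := minimalPeriod_pos_of_mem_periodicPts
    ((hM₂.injective.comp hM₁.injective).mem_periodicPts x)
  set O := (range k).image (f^[·] x)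
  have hO : ∀ n, f^[n] x ∈ O := fun n =>
    mem_image.2 ⟨n % k, mem_range.2 (Nat.mod_lt _ hk), iterate_mod_minimalPeriod_eq⟩
  have hOV₁ : ∀ v ∈ O, v ∈ V₁ := by
    rintro _ hv
    obtain ⟨i, -, rfl⟩ := mem_image.1 hv
    exact (mapsTo_comp_of_bipartite hbip hM₁.2 hM₂.2).iterate i hx
  set S := O ∪ O.image M₁
  have hSM₁ : ∀ v ∈ S, M₁ v ∈ S := by
    rintro v hv
    rcases mem_union.1 hv with hv | hv
    · exact mem_union_right _ (mem_image_of_mem _ hv)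
    · obtain ⟨y, hy, rfl⟩ := mem_image.1 hv
      rw [hM₁.1]
      exact mem_union_left _ hy
  have hSM₂ : ∀ v ∈ S, M₂ v ∈ S := by
    rintro v hv
    rcases mem_union.1 hv with hv | hv
    · obtain ⟨i, -, rfl⟩ := mem_image.1 hv
      -- `M₂ (f y) = M₁ y`, so it suffices to find the `f`-preimage of `f^[i] x` in the orbit
      have hpred : f (f^[i + k - 1] x) = f^[i] x := by
        rw [← iterate_succ_apply' f, show (i + k - 1).succ = i + k by omega, iterate_add_apply,
          iterate_minimalPeriod]
      rw [← hpred]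
      change M₂ (M₂ (M₁ _)) ∈ S
      rw [hM₂.1]
      exact mem_union_right _ (mem_image_of_mem _ (hO _))
    · obtain ⟨y, hy, rfl⟩ := mem_image.1 hv
      obtain ⟨i, -, rfl⟩ := mem_image.1 hy
      change f (f^[i] x) ∈ S
      rw [← iterate_succ_apply' f]
      exact mem_union_left _ (hO _)
  have hSV₁ : {v ∈ S | v ∈ V₁} = O := by
    ext v
    refine ⟨fun hv => ?_, fun hv => mem_filter.2 ⟨mem_union_left _ hv, hOV₁ v hv⟩⟩
    obtain ⟨hvS, hvV₁⟩ := mem_filter.1 hv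
    rcases mem_union.1 hvS with hv | hv
    · exact hv
    · obtain ⟨y, hy, rfl⟩ := mem_image.1 hv
      exact absurd hvV₁ ((hbip _ _ (hM₁.2 y)).1 (hOV₁ y hy))
  have hinj : Set.InjOn (f^[·] x) (range k) := by
    rw [coe_range]
    exact iterate_injOn_Iio_minimalPeriod
  have h := hmin₁.sum_filter_eq hmin₂ hSM₁ hSM₂
  rwa [hSV₁, sum_image hinj, sum_image hinj] at h

end PerfectMatchingFun

open Classical in
theorem stmt0 {V : Type*} [Fintype V] (G : SimpleGraph V) (V₁ : Set V)
    (hbip : ∀ u v, G.Adj u v → (u ∈ V₁ ↔ v ∉ V₁))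
    (w : V → V → ℤ) (hskew : ∀ u v, w u v = - w v u)
    (hcirc : ∀ (v : V) (p : G.Walk v v), p.IsCycle →
      (p.darts.map (fun d => w d.toProd.1 d.toProd.2)).sum ≠ 0)
    (M₁ M₂ : V → V)
    (hM₁ : (∀ v, M₁ (M₁ v) = v) ∧ ∀ v, G.Adj v (M₁ v))
    (hM₂ : (∀ v, M₂ (M₂ v) = v) ∧ ∀ v, G.Adj v (M₂ v))
    (hmin₁ : ∀ M : V → V, ((∀ v, M (M v) = v) ∧ ∀ v, G.Adj v (M v)) →
      (∑ v : V, if v ∈ V₁ then w v (M₁ v) else 0) ≤ ∑ v : V, if v ∈ V₁ then w v (M v) else 0)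
    (hmin₂ : ∀ M : V → V, ((∀ v, M (M v) = v) ∧ ∀ v, G.Adj v (M v)) →
      (∑ v : V, if v ∈ V₁ then w v (M₂ v) else 0) ≤ ∑ v : V, if v ∈ V₁ then w v (M v) else 0) :
    M₁ = M₂ := by
  have hmin₁' : IsMinWeightPerfectMatchingFun G V₁ w M₁ := ⟨hM₁, hmin₁⟩
  have hmin₂' : IsMinWeightPerfectMatchingFun G V₁ w M₂ := ⟨hM₂, hmin₂⟩
  by_contra hne
  obtain ⟨x, hx, hx₁₂⟩ := exists_mem_ne_of_ne hbip hM₁ hM₂ hne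
  have hnotFixed : ¬IsFixedPt (M₂ ∘ M₁) x := fun h =>
    hx₁₂ ((hM₂.1 (M₁ x)).symm.trans (congrArg M₂ h))
  have hk : 2 ≤ minimalPeriod (M₂ ∘ M₁) x := by
    have hpos := minimalPeriod_pos_of_mem_periodicPts
      ((hmin₂'.1.injective.comp hmin₁'.1.injective).mem_periodicPts x)
    have hne1 := mt minimalPeriod_eq_one_iff_isFixedPt.1 hnotFixed
    omega
  have horbit : ∀ i, (M₂ ∘ M₁)^[i] x ∈ V₁ := fun i =>
    (mapsTo_comp_of_bipartite hbip hM₁.2 hM₂.2).iterate i hx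
  have hC := isCycle_alternatingWalk hM₁.2 hM₂.2 hk iterate_minimalPeriod
    iterate_injOn_Iio_minimalPeriod hmin₁'.1.injective
    fun i j h => (hbip _ _ (hM₁.2 _)).1 (horbit i) (h ▸ horbit j)
  refine hcirc x _ hC ?_
  change Walk.circulation w _ = 0
  rw [circulation_copy_alternatingWalk _ _ w hskew hM₂.1,
    hmin₁'.sum_range_minimalPeriod_eq hbip hmin₂' hx, sub_self]
end

section
/- Let T be a finite tree and wt(T) its working tree (a rooted tree on the same vertex set, built by recursively choosing centroids). For any two vertices u, v of T, if a is the least common ancestor of u and v in wt(T), then a lies on the unique path between u and v in T. -/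
/-!
Suppose the `T`-path `q` from `u` to `v` avoids their lowest common ancestor `a`. Each subtree of
the working tree is a connected component of its parent's subtree with the parent removed, so,
paths in a tree being unique, `q` stays in the subtree of `a`, hence in the subtree of `a` with `a`
removed. Thus `v` lies in the same component of it as `u`, namely in the subtree of the child `c`
of `a` above `u`; so `c` is a common ancestor of `u` and `v` strictly below `a`, which is absurd.
-/

def desc {V : Type*} (p : V → V) (v : V) : Set V := {u | ∃ k, p^[k] u = v}

namespace SimpleGraph

variable {V : Type*} {G : SimpleGraph V}

lemma ConnectedComponent.mem_supp_of_mem_support {C : G.ConnectedComponent} {u v w : V}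
    (q : G.Walk u v) (hu : u ∈ C.supp) (hw : w ∈ q.support) : w ∈ C.supp := by
  classical
  rw [ConnectedComponent.mem_supp_iff] at hu ⊢
  rw [← hu]
  exact ConnectedComponent.sound (q.takeUntil w hw).reverse.reachable

variable {s : Set V}

lemma ConnectedComponent.mem_image_supp_of_walk {C : (G.induce s).ConnectedComponent} {x y : V}
    (q : G.Walk x y) (hq : ∀ z ∈ q.support, z ∈ s) (hx : x ∈ Subtype.val '' C.supp) :
    y ∈ Subtype.val '' C.supp := by
  obtain ⟨x', hx', rfl⟩ := hx
  exact ⟨_, C.mem_supp_of_mem_support (q.induce s hq) hx' (Walk.end_mem_support _), rfl⟩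

lemma IsAcyclic.support_subset_image_supp (hG : G.IsAcyclic)
    {C : (G.induce s).ConnectedComponent} {x y : V} {q : G.Walk x y} (hq : q.IsPath)
    (hx : x ∈ Subtype.val '' C.supp) (hy : y ∈ Subtype.val '' C.supp) :
    ∀ z ∈ q.support, z ∈ Subtype.val '' C.supp := by
  classical
  obtain ⟨x', hx', rfl⟩ := hx
  obtain ⟨y', hy', rfl⟩ := hy
  obtain ⟨w⟩ := C.reachable_of_mem_supp hx' hy'
  have hq_eq : q = (w.map (Embedding.induce s).toHom).toPath.val :=
    congrArg Subtype.val ((hG.subsingleton_path _ _).elim ⟨q, hq⟩ _)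
  intro z hz
  rw [hq_eq] at hz
  have hz_map := Walk.support_toPath_subset_support (w.map (Embedding.induce s).toHom) hz
  rw [Walk.support_map] at hz_map
  obtain ⟨z', hz', rfl⟩ := List.mem_map.1 hz_map
  exact ⟨z', C.mem_supp_of_mem_support w hx' hz', rfl⟩

end SimpleGraph

section ParentFunction

variable {V : Type*} {p : V → V} {r : V}

lemma eq_root_of_iterate_eq_self (hroot : p r = r) (hreach : ∀ v, ∃ k, p^[k] v = r) {x : V}
    {k : ℕ} (hk : p^[k] x = x) (hk0 : k ≠ 0) : x = r := by
  obtain ⟨m, hm⟩ := hreach x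
  have hkm : m ≤ k * m := Nat.le_mul_of_pos_left m (Nat.pos_of_ne_zero hk0)
  calc x = p^[k * m] x := ((Function.IsPeriodicPt.mul_const hk m).eq).symm
    _ = p^[k * m - m] (p^[m] x) := by rw [← Function.iterate_add_apply, Nat.sub_add_cancel hkm]
    _ = r := by rw [hm, Function.iterate_fixed hroot]

lemma notMem_desc_of_parent_eq (hroot : p r = r) (hreach : ∀ v, ∃ k, p^[k] v = r) {a c : V}
    (hpc : p c = a) (hca : c ≠ a) : a ∉ desc p c := by
  rintro ⟨m, hm⟩
  have har : a = r :=
    eq_root_of_iterate_eq_self hroot hreach (by rw [Function.iterate_succ_apply', hm, hpc])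
      m.succ_ne_zero
  subst har
  exact hca (hm.symm.trans (Function.iterate_fixed hroot m))

lemma exists_child_of_mem_desc {a x : V} (hx : x ∈ desc p a) (hxa : x ≠ a) :
    ∃ c, p c = a ∧ c ≠ a ∧ x ∈ desc p c := by
  classical
  have hk : p^[Nat.find hx] x = a := Nat.find_spec hx
  have hk0 : Nat.find hx ≠ 0 := fun h => hxa (by rwa [h] at hk)
  refine ⟨p^[Nat.find hx - 1] x, ?_, ?_, ⟨_, rfl⟩⟩
  · rwa [← Function.iterate_succ_apply' p, Nat.succ_eq_add_one, Nat.sub_add_cancel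
      (Nat.one_le_iff_ne_zero.2 hk0)]
  · exact Nat.find_min hx (Nat.sub_lt (Nat.pos_of_ne_zero hk0) Nat.one_pos)

end ParentFunction

section WorkingTree

variable {V : Type*} {T : SimpleGraph V} {p : V → V} {r : V}

lemma support_subset_desc_of_isPath (hT : T.IsAcyclic) (hreach : ∀ v, ∃ k, p^[k] v = r)
    (hcomp : ∀ u, u ≠ r → ∃ K : (T.induce (desc p (p u) \ {p u})).ConnectedComponent,
        desc p u = Subtype.val '' K.supp)
    {a u v : V} (hua : u ∈ desc p a) (hva : v ∈ desc p a) {q : T.Walk u v} (hq : q.IsPath) :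
    ∀ z ∈ q.support, z ∈ desc p a := by
  by_cases har : a = r
  · subst har
    exact fun z _ => hreach z
  · obtain ⟨K, hK⟩ := hcomp a har
    rw [hK] at hua hva ⊢
    exact hT.support_subset_image_supp hq hua hva

lemma mem_desc_of_walk
    (hcomp : ∀ u, u ≠ r → ∃ K : (T.induce (desc p (p u) \ {p u})).ConnectedComponent,
        desc p u = Subtype.val '' K.supp)
    {c u v : V} (hcr : c ≠ r) (huc : u ∈ desc p c) (q : T.Walk u v)
    (hq : ∀ z ∈ q.support, z ∈ desc p (p c) \ {p c}) : v ∈ desc p c := by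
  obtain ⟨K, hK⟩ := hcomp c hcr
  rw [hK] at huc ⊢
  exact K.mem_image_supp_of_walk q hq huc

end WorkingTree

theorem stmt4_general {V : Type*} (T : SimpleGraph V) (hT : T.IsTree)
    (p : V → V) (r : V)
    (hroot : p r = r)
    (hreach : ∀ v, ∃ k, p^[k] v = r)
    (hcomp : ∀ u, u ≠ r → ∃ K : (T.induce (desc p (p u) \ {p u})).ConnectedComponent,
        desc p u = Subtype.val '' K.supp)
    (u v a : V)
    (hua : u ∈ desc p a) (hva : v ∈ desc p a)
    (hlca : ∀ b, u ∈ desc p b → v ∈ desc p b → a ∈ desc p b) :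
    ∀ (q : T.Walk u v), q.IsPath → a ∈ q.support := by
  intro q hq
  by_contra ha
  obtain ⟨c, hpc, hca, huc⟩ :=
    exists_child_of_mem_desc hua fun h => ha (h ▸ q.start_mem_support)
  have hcr : c ≠ r := by
    rintro rfl
    exact hca (hroot.symm.trans hpc)
  have hq_sub : ∀ z ∈ q.support, z ∈ desc p (p c) \ {p c} := fun z hz =>
    ⟨hpc ▸ support_subset_desc_of_isPath hT.isAcyclic hreach hcomp hua hva hq z hz,
      fun hz_eq => ha (hpc ▸ (Set.mem_singleton_iff.1 hz_eq) ▸ hz)⟩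
  have hvc : v ∈ desc p c := mem_desc_of_walk hcomp hcr huc q hq_sub
  exact notMem_desc_of_parent_eq hroot hreach hpc hca (hlca c huc hvc)

theorem stmt4 {V : Type*} [Fintype V] (T : SimpleGraph V) (hT : T.IsTree)
    (p : V → V) (r : V)
    (hroot : p r = r)
    (hreach : ∀ v, ∃ k, p^[k] v = r)
    (hcomp : ∀ u, u ≠ r → ∃ K : (T.induce (desc p (p u) \ {p u})).ConnectedComponent,
        desc p u = Subtype.val '' K.supp)
    (hhalf : ∀ u, u ≠ r → 2 * Nat.card (desc p u) ≤ Nat.card (desc p (p u)))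
    (u v a : V)
    (hua : u ∈ desc p a) (hva : v ∈ desc p a)
    (hlca : ∀ b, u ∈ desc p b → v ∈ desc p b → a ∈ desc p b) :
    ∀ (q : T.Walk u v), q.IsPath → a ∈ q.support :=
  stmt4_general T hT p r hroot hreach hcomp u v a hua hva hlca
end

section
/- Let T be a finite tree, wt(T) its working tree, and S a subtree (connected subgraph) of T with vertex set {v_1,...,v_k}. Then there exists an index i* such that every v_j with j ≠ i* is a strict descendant of v_{i*} in wt(T). -/
/-! Take `v ∈ S` of least depth in the working tree. An edge of `T` leaving the descendants of
`w` ends at a strict ancestor of `w`: the descendants of `w` form a connected component of the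
descendants of `p w` with `p w` removed, so the edge either ends at `p w` or leaves the
descendants of `p w` too, and induction on the depth of `w` applies. Hence a walk inside `S`
leaving the descendants of `v` would reach a vertex of `S` above `v`, contradicting the
choice of `v`. -/

section WorkingTree

variable {V : Type*} {p : V → V} {r : V}

lemma mem_desc_self (p : V → V) (v : V) : v ∈ desc p v := ⟨0, rfl⟩

lemma desc_subset_desc_parent (p : V → V) (u : V) : desc p u ⊆ desc p (p u) := by
  rintro x ⟨k, hk⟩
  exact ⟨k + 1, by rw [Function.iterate_succ_apply', hk]⟩

lemma mem_desc_of_parent_mem {u y : V} (h : p u ∈ desc p y) : u ∈ desc p y := by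
  obtain ⟨m, hm⟩ := h
  exact ⟨m + 1, by rwa [Function.iterate_succ_apply]⟩

lemma mem_image_supp_of_adj {G : SimpleGraph V} {A : Set V}
    (K : (G.induce A).ConnectedComponent) {x y : V} (hx : x ∈ Subtype.val '' K.supp)
    (hy : y ∈ A) (hxy : G.Adj x y) : y ∈ Subtype.val '' K.supp := by
  obtain ⟨x', hx'K, rfl⟩ := hx
  refine ⟨⟨y, hy⟩, ?_, rfl⟩
  rw [SimpleGraph.ConnectedComponent.mem_supp_iff] at hx'K ⊢
  rw [← hx'K]
  exact SimpleGraph.ConnectedComponent.sound (SimpleGraph.Adj.reachable (by simpa using hxy.symm))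

lemma mem_desc_of_exit_adj (T : SimpleGraph V) (hreach : ∀ v, ∃ k, p^[k] v = r)
    (hcomp : ∀ u, u ≠ r → ∃ K : (T.induce (desc p (p u) \ {p u})).ConnectedComponent,
        desc p u = Subtype.val '' K.supp)
    {w x y : V} (hx : x ∈ desc p w) (hxy : T.Adj x y) (hy : y ∉ desc p w) : w ∈ desc p y := by
  obtain ⟨k, hk⟩ := hreach w
  induction k generalizing w with
  | zero =>
    subst hk
    exact absurd (hreach y) hy
  | succ k ih =>
    have hw : w ≠ r := by
      rintro rfl
      exact hy (hreach y)
    by_cases hy_parent : y = p w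
    · exact ⟨1, hy_parent.symm⟩
    by_cases hy_up : y ∈ desc p (p w)
    · obtain ⟨K, hK⟩ := hcomp w hw
      rw [hK] at hx hy
      exact absurd (mem_image_supp_of_adj K hx ⟨hy_up, hy_parent⟩ hxy) hy
    · rw [Function.iterate_succ_apply] at hk
      exact mem_desc_of_parent_mem (ih (desc_subset_desc_parent p w hx) hy_up hk)

open Classical in
noncomputable def depth (hreach : ∀ v, ∃ k, p^[k] v = r) (v : V) : ℕ := Nat.find (hreach v)

lemma iterate_depth (hreach : ∀ v, ∃ k, p^[k] v = r) (v : V) : p^[depth hreach v] v = r := by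
  classical
  exact Nat.find_spec (hreach v)

lemma depth_le (hreach : ∀ v, ∃ k, p^[k] v = r) {v : V} {n : ℕ} (h : p^[n] v = r) :
    depth hreach v ≤ n := by
  classical
  exact Nat.find_le h

lemma depth_lt_of_mem_desc (hroot : p r = r) (hreach : ∀ v, ∃ k, p^[k] v = r)
    {w y : V} (h : w ∈ desc p y) (hne : w ≠ y) : depth hreach y < depth hreach w := by
  obtain ⟨j, rfl⟩ := h
  obtain ⟨i, rfl⟩ := Nat.exists_eq_succ_of_ne_zero (fun hj : j = 0 => hne (by simp [hj]))
  obtain ⟨n, hn⟩ := Nat.exists_eq_succ_of_ne_zero (fun h0 : depth hreach w = 0 => hne <| by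
    have hw : w = r := by simpa [h0] using iterate_depth hreach w
    rw [hw, Function.iterate_fixed hroot])
  have hw : p^[n + 1] w = r := by simpa [hn] using iterate_depth hreach w
  have hy : p^[n] (p^[i + 1] w) = r := by
    rw [← Function.iterate_add_apply, show n + (i + 1) = i + (n + 1) by omega,
      Function.iterate_add_apply, hw, Function.iterate_fixed hroot]
  exact hn ▸ Nat.lt_succ_of_le (depth_le hreach hy)

end WorkingTree

theorem stmt5_general {V : Type*} (T : SimpleGraph V)
    (p : V → V) (r : V)
    (hroot : p r = r)
    (hreach : ∀ v, ∃ k, p^[k] v = r)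
    (hcomp : ∀ u, u ≠ r → ∃ K : (T.induce (desc p (p u) \ {p u})).ConnectedComponent,
        desc p u = Subtype.val '' K.supp)
    (S : Set V) (hS : S.Nonempty) (hconn : (T.induce S).Connected) :
    ∃ v ∈ S, ∀ u ∈ S, u ≠ v → u ∈ desc p v := by
  obtain ⟨v, hvS, hvmin⟩ := (InvImage.wf (depth hreach) wellFounded_lt).has_min S hS
  refine ⟨v, hvS, fun u huS _ => ?_⟩
  by_contra hu
  obtain ⟨walk⟩ := hconn.preconnected ⟨v, hvS⟩ ⟨u, huS⟩
  obtain ⟨d, -, hd_in, hd_out⟩ :=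
    walk.exists_boundary_dart {x | (x : V) ∈ desc p v} (mem_desc_self p v) hu
  have hv_below : v ∈ desc p d.snd :=
    mem_desc_of_exit_adj T hreach hcomp hd_in (by simpa using d.adj) hd_out
  have hne : v ≠ d.snd := fun h => hd_out (h ▸ mem_desc_self p v)
  exact hvmin d.snd d.snd.2 (depth_lt_of_mem_desc hroot hreach hv_below hne)

theorem stmt5 {V : Type*} [Fintype V] (T : SimpleGraph V) (hT : T.IsTree)
    (p : V → V) (r : V)
    (hroot : p r = r)
    (hreach : ∀ v, ∃ k, p^[k] v = r)
    (hcomp : ∀ u, u ≠ r → ∃ K : (T.induce (desc p (p u) \ {p u})).ConnectedComponent,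
        desc p u = Subtype.val '' K.supp)
    (hhalf : ∀ u, u ≠ r → 2 * Nat.card (desc p u) ≤ Nat.card (desc p (p u)))
    (S : Set V) (hS : S.Nonempty) (hconn : (T.induce S).Connected) :
    ∃ v ∈ S, ∀ u ∈ S, u ≠ v → u ∈ desc p v :=
  stmt5_general T p r hroot hreach hcomp S hS hconn
end

section
/- Let G be a graph, v a vertex of G, and X_1 ⊔ X_2 a partition of the edges incident to v. Form G' by replacing v with a path v - v' - v'' (two new vertices and two new edges), attaching the edges of X_1 to v and the edges of X_2 to v''. Then there is a bijection between the perfect matchings of G and the perfect matchings of G'. -/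
/-!
A perfect matching of a graph is the same thing as an involution `f` of its vertex set with every
`x` adjacent to `f x` (the partner map). In the split graph the new vertex `v'` has only the
neighbours `v` and `v''`. So a perfect matching of the split graph either contains `v'v''`, and then
it is a perfect matching of `G` in which `v` is matched into `X₁`, or it contains `vv'`, and then
`v''` is matched to a vertex `u ∈ X₂`, which corresponds to the edge `vu` of `G`. Both directions
are explicit maps between partner functions, and the round trips are checked vertex by vertex.
-/

open Function

namespace SimpleGraph

namespace Subgraph

variable {W : Type*} {H : SimpleGraph W}

def ofPartner (f : W → W) (hf : Involutive f) (hH : ∀ x, H.Adj x (f x)) : H.Subgraph where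
  verts := Set.univ
  Adj x y := y = f x
  adj_sub := by rintro x _ rfl; exact hH x
  edge_vert _ := trivial
  symm := ⟨by rintro x _ rfl; exact (hf x).symm⟩

lemma isPerfectMatching_ofPartner {f : W → W} {hf : Involutive f} {hH : ∀ x, H.Adj x (f x)} :
    (ofPartner f hf hH).IsPerfectMatching :=
  isPerfectMatching_iff.2 fun _ => existsUnique_eq

namespace IsPerfectMatching

variable {M : H.Subgraph} (hM : M.IsPerfectMatching)
include hM

noncomputable def partner (x : W) : W :=
  (isPerfectMatching_iff.1 hM x).exists.choose

lemma adj_partner (x : W) : M.Adj x (hM.partner x) :=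
  (isPerfectMatching_iff.1 hM x).exists.choose_spec

lemma adj_iff_eq_partner {x y : W} : M.Adj x y ↔ y = hM.partner x :=
  ⟨fun h => (isPerfectMatching_iff.1 hM x).unique h (hM.adj_partner x),
    fun h => h ▸ hM.adj_partner x⟩

lemma partner_involutive : Involutive hM.partner := fun x =>
  (hM.adj_iff_eq_partner.1 (hM.adj_partner x).symm).symm

end IsPerfectMatching

variable (H) in
noncomputable def perfectMatchingEquivPartner :
    {M : H.Subgraph // M.IsPerfectMatching} ≃
      {f : W → W // Involutive f ∧ ∀ x, H.Adj x (f x)} where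
  toFun M := ⟨M.2.partner, M.2.partner_involutive, fun x => M.1.adj_sub (M.2.adj_partner x)⟩
  invFun f := ⟨ofPartner f.1 f.2.1 f.2.2, isPerfectMatching_ofPartner⟩
  left_inv M := Subtype.ext <| Subgraph.ext (Set.eq_univ_of_forall M.2.2).symm <| by
    ext x y
    exact M.2.adj_iff_eq_partner.symm
  right_inv f := Subtype.ext <| funext fun _ =>
    ((isPerfectMatching_ofPartner (hf := f.2.1) (hH := f.2.2)).adj_iff_eq_partner.1 rfl).symm

end Subgraph

variable {V : Type*}

/-- `Sum.inr false` is the new vertex `v'` and `Sum.inr true` is `v''`; the neighbours of `v` in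
`X` are moved from `v` to `v''`. -/
def vertexSplitAdj (G : SimpleGraph V) (v : V) (X : Set V) : V ⊕ Bool → V ⊕ Bool → Prop
  | .inl a, .inl b => G.Adj a b ∧ ¬(a = v ∧ b ∈ X) ∧ ¬(b = v ∧ a ∈ X)
  | .inl a, .inr false | .inr false, .inl a => a = v
  | .inl a, .inr true | .inr true, .inl a => a ∈ X
  | .inr b, .inr c => b ≠ c

def vertexSplit (G : SimpleGraph V) (v : V) (X : Set V) : SimpleGraph (V ⊕ Bool) where
  Adj := vertexSplitAdj G v X
  symm := ⟨by rintro (a | _ | _) (b | _ | _) h <;> simp_all [vertexSplitAdj, G.adj_comm]⟩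
  loopless := ⟨by rintro (a | _ | _) h <;> simp_all [vertexSplitAdj]⟩

lemma fromRel_eq_vertexSplit (G : SimpleGraph V) (v : V) (X : Set V) :
    SimpleGraph.fromRel (fun x y =>
      (∃ a b, x = Sum.inl a ∧ y = Sum.inl b ∧ G.Adj a b ∧
        ¬(a = v ∧ b ∈ X) ∧ ¬(b = v ∧ a ∈ X)) ∨
      (x = Sum.inl v ∧ y = Sum.inr false) ∨
      (∃ a, a ∈ X ∧ x = Sum.inr true ∧ y = Sum.inl a) ∨
      (x = Sum.inr false ∧ y = Sum.inr true)) = G.vertexSplit v X := by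
  ext x y
  rcases x with a | _ | _ <;> rcases y with b | _ | _ <;>
    simp only [fromRel_adj, vertexSplit, vertexSplitAdj] <;> grind [G.adj_comm, G.ne_of_adj]

variable {G : SimpleGraph V} {v : V} {X : Set V}

lemma vertexSplit_adj_inr_false {x : V ⊕ Bool} (h : (G.vertexSplit v X).Adj (.inr false) x) :
    x = .inl v ∨ x = .inr true := by
  rcases x with a | _ | _ <;> simp_all [vertexSplit, vertexSplitAdj]

lemma vertexSplit_adj_inr_true {x : V ⊕ Bool} (h : (G.vertexSplit v X).Adj (.inr true) x) :
    x = .inr false ∨ ∃ a ∈ X, x = .inl a := by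
  rcases x with a | _ | _ <;> simp_all [vertexSplit, vertexSplitAdj]

variable (v X) in
open Classical in
noncomputable def splitPartner (f : V → V) : V ⊕ Bool → V ⊕ Bool
  | .inl a =>
    if f v ∈ X ∧ a = v then .inr false else if f v ∈ X ∧ a = f v then .inr true else .inl (f a)
  | .inr false => if f v ∈ X then .inl v else .inr true
  | .inr true => if f v ∈ X then .inl (f v) else .inr false

variable (v) in
def contractPartner (g : V ⊕ Bool → V ⊕ Bool) (a : V) : V :=
  match g (.inl a) with
  | .inl b => b
  -- `a = v` is matched to `v'`, so its partner in `G` is the partner of `v''`, which lies in `X`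
  | .inr false => Sum.elim id (fun _ => v) (g (.inr true))
  | .inr true => v

section splitPartner

variable {f : V → V} (hf : Involutive f)
include hf

lemma splitPartner_involutive (hfv : f v ≠ v) : Involutive (splitPartner v X f) := by
  rintro (a | _ | _) <;> simp only [splitPartner] <;> grind [Involutive]

lemma adj_splitPartner (hG : ∀ a, G.Adj a (f a)) (x : V ⊕ Bool) :
    (G.vertexSplit v X).Adj x (splitPartner v X f x) := by
  rcases x with a | _ | _ <;> simp only [splitPartner] <;> split_ifs <;>
    simp [vertexSplit, vertexSplitAdj] <;> grind [Involutive]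

lemma contractPartner_splitPartner : contractPartner v (splitPartner v X f) = f := by
  funext a
  simp only [splitPartner, contractPartner]
  grind [Involutive]

end splitPartner

section contractPartner

variable {g : V ⊕ Bool → V ⊕ Bool} (hg : Involutive g)
  (hG : ∀ x, (G.vertexSplit v X).Adj x (g x))
include hg hG

lemma contractPartner_involutive : Involutive (contractPartner v g) := by
  have hv' := vertexSplit_adj_inr_false (hG (.inr false))
  have hv'' := vertexSplit_adj_inr_true (hG (.inr true))
  intro a
  unfold contractPartner
  grind [Involutive]

lemma adj_contractPartner (hX : ∀ a ∈ X, G.Adj v a) (a : V) :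
    G.Adj a (contractPartner v g a) := by
  have hv' := vertexSplit_adj_inr_false (hG (.inr false))
  have hv'' := vertexSplit_adj_inr_true (hG (.inr true))
  have ha := hG (.inl a)
  unfold contractPartner
  split
  next b hb =>
    rw [hb] at ha
    exact ha.1
  · grind [Involutive]
  · grind [Involutive, G.adj_comm]

lemma splitPartner_contractPartner : splitPartner v X (contractPartner v g) = g := by
  have hv' := vertexSplit_adj_inr_false (hG (.inr false))
  have hv'' := vertexSplit_adj_inr_true (hG (.inr true))
  have hv : ∀ b, g (.inl v) = .inl b → b ∉ X := fun b hb hbX => by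
    have := hG (.inl v)
    rw [hb] at this
    exact this.2.1 ⟨rfl, hbX⟩
  funext x
  rcases x with a | _ | _ <;> simp only [splitPartner, contractPartner] <;> grind [Involutive]

end contractPartner

noncomputable def vertexSplitPartnerEquiv (hX : ∀ a ∈ X, G.Adj v a) :
    {f : V → V // Involutive f ∧ ∀ a, G.Adj a (f a)} ≃
      {g : V ⊕ Bool → V ⊕ Bool // Involutive g ∧ ∀ x, (G.vertexSplit v X).Adj x (g x)} where
  toFun f := ⟨splitPartner v X f.1, splitPartner_involutive f.2.1 (f.2.2 v).ne',
    adj_splitPartner f.2.1 f.2.2⟩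
  invFun g := ⟨contractPartner v g.1, contractPartner_involutive g.2.1 g.2.2,
    adj_contractPartner g.2.1 g.2.2 hX⟩
  left_inv f := Subtype.ext (contractPartner_splitPartner f.2.1)
  right_inv g := Subtype.ext (splitPartner_contractPartner g.2.1 g.2.2)

end SimpleGraph

open Classical in
theorem stmt6_general {V : Type*} (G : SimpleGraph V) (v : V)
    (X₁ X₂ : Set V) (hunion : X₁ ∪ X₂ = G.neighborSet v) :
    let G' : SimpleGraph (V ⊕ Bool) := SimpleGraph.fromRel (fun x y =>
      (∃ a b, x = Sum.inl a ∧ y = Sum.inl b ∧ G.Adj a b ∧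
        ¬(a = v ∧ b ∈ X₂) ∧ ¬(b = v ∧ a ∈ X₂)) ∨
      (x = Sum.inl v ∧ y = Sum.inr false) ∨
      (∃ a, a ∈ X₂ ∧ x = Sum.inr true ∧ y = Sum.inl a) ∨
      (x = Sum.inr false ∧ y = Sum.inr true))
    Nonempty ({M : G.Subgraph // M.IsPerfectMatching} ≃
      {M : G'.Subgraph // M.IsPerfectMatching}) := by
  intro G'
  have hX₂ : ∀ a ∈ X₂, G.Adj v a := fun a ha => hunion.subset (Or.inr ha)
  rw [show G' = G.vertexSplit v X₂ from SimpleGraph.fromRel_eq_vertexSplit G v X₂]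
  exact ⟨(SimpleGraph.Subgraph.perfectMatchingEquivPartner G).trans <|
    (SimpleGraph.vertexSplitPartnerEquiv hX₂).trans
      (SimpleGraph.Subgraph.perfectMatchingEquivPartner _).symm⟩

open Classical in
theorem stmt6 {V : Type*} [Fintype V] (G : SimpleGraph V) (v : V)
    (X₁ X₂ : Set V) (hdisj : Disjoint X₁ X₂) (hunion : X₁ ∪ X₂ = G.neighborSet v) :
    let G' : SimpleGraph (V ⊕ Bool) := SimpleGraph.fromRel (fun x y =>
      (∃ a b, x = Sum.inl a ∧ y = Sum.inl b ∧ G.Adj a b ∧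
        ¬(a = v ∧ b ∈ X₂) ∧ ¬(b = v ∧ a ∈ X₂)) ∨
      (x = Sum.inl v ∧ y = Sum.inr false) ∨
      (∃ a, a ∈ X₂ ∧ x = Sum.inr true ∧ y = Sum.inl a) ∨
      (x = Sum.inr false ∧ y = Sum.inr true))
    Nonempty ({M : G.Subgraph // M.IsPerfectMatching} ≃
      {M : G'.Subgraph // M.IsPerfectMatching}) :=
  stmt6_general G v X₁ X₂ hunion
end

section
/- Let G be a graph obtained as a clique-sum of graphs G_1 and G_2 along a shared clique K, and let C be a cycle in G using vertices from both G_1 \ K and G_2 \ K. Let {a,b} ⊆ K be the vertices where C crosses between the two sides (|K| ≤ 3 so C crosses exactly twice). Then C decomposes as the sum of two cycles C_1 in G_1 and C_2 in G_2, where C_1 consists of the edges of C inside G_1 together with the virtual edge (a,b), and C_2 consists of the edges of C inside G_2 together with the virtual edge (b,a); moreover every real edge of C belongs to exactly one of C_1, C_2. -/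
/-!
Rotate the cycle to start at `a` and cut it at `b` into two `a`–`b` paths. The interior
vertices of each path avoid the separator `V₁ ∩ V₂`, and every edge lies within `V₁` or
within `V₂`, so consecutive edges are always on the same side: each path lies entirely within
`V₁` or entirely within `V₂`. They cannot lie on the same side, since the cycle has vertices
in both `V₁ \ V₂` and `V₂ \ V₁`. Closing each path with the virtual edge `ab` gives `C₁` and
`C₂`; an edge within both sides would lie in `K`, so the two paths partition the edges of `C`.
-/

theorem Multiset.filter_add_eq_left {α : Type*} {p : α → Prop} [DecidablePred p]
    {s t : Multiset α} (hs : ∀ x ∈ s, p x) (ht : ∀ x ∈ t, ¬ p x) : (s + t).filter p = s := by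
  rw [Multiset.filter_add, Multiset.filter_eq_self.mpr hs, Multiset.filter_eq_nil.mpr ht,
    add_zero]

namespace SimpleGraph.Walk

variable {V : Type*} {G : SimpleGraph V}

theorem mem_of_mem_support_of_forall_edges {A : Set V} {u v : V} {p : G.Walk u v}
    (hp : ¬ p.Nil) (hA : ∀ e ∈ p.edges, ∀ x ∈ e, x ∈ A) {x : V} (hx : x ∈ p.support) :
    x ∈ A := by
  obtain ⟨e, he, hxe⟩ := (mem_support_iff_exists_mem_edges_of_not_nil hp).mp hx
  exact hA e he x hxe

theorem IsCycle.exists_isPath_append [DecidableEq V] {u a b : V} {c : G.Walk u u}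
    (hc : c.IsCycle) (ha : a ∈ c.support) (hb : b ∈ c.support) (hab : a ≠ b) :
    ∃ (p : G.Walk a b) (q : G.Walk b a), p.IsPath ∧ q.IsPath ∧
      (c.edges : Multiset (Sym2 V)) = p.edges + q.edges ∧
      ∀ x, x ∈ c.support ↔ x ∈ p.support ∨ x ∈ q.support := by
  set d := c.rotate a ha
  have hbd : b ∈ d.support := (c.mem_support_rotate_iff a ha).mpr hb
  have hd : (d.takeUntil b hbd).append (d.dropUntil b hbd) = d := d.take_spec hbd
  have hdc : d.IsCycle := hc.rotate ha
  rw [← hd] at hdc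
  refine ⟨_, _, hdc.isPath_of_append_left (not_nil_of_ne hab.symm),
    hdc.isPath_of_append_right (not_nil_of_ne hab), ?_, fun x => ?_⟩
  · rw [Multiset.coe_add, ← edges_append, hd, Multiset.coe_eq_coe]
    exact (c.rotate_edges a ha).perm.symm
  · rw [← mem_support_append_iff, hd, c.mem_support_rotate_iff]

theorem IsPath.forall_edges_within_or {A B : Set V}
    (hsep : ∀ x y, G.Adj x y → (x ∈ A ∧ y ∈ A) ∨ (x ∈ B ∧ y ∈ B)) {u v : V} {p : G.Walk u v}
    (hp : p.IsPath) (hint : ∀ z ∈ p.support, z ∈ A → z ∈ B → z = u ∨ z = v) :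
    (∀ e ∈ p.edges, ∀ x ∈ e, x ∈ A) ∨ (∀ e ∈ p.edges, ∀ x ∈ e, x ∈ B) := by
  induction p with
  | nil => simp
  | @cons x w y h q ih =>
    rw [cons_isPath_iff] at hp
    have hq := ih hp.1 fun z hz hA hB =>
      Or.inr ((hint z (by simp [hz]) hA hB).resolve_left fun hzx => hp.2 (hzx ▸ hz))
    have hedge : ∀ S : Set V, x ∈ S → w ∈ S → ∀ x' ∈ s(x, w), x' ∈ S := by
      simp +contextual
    simp only [edges_cons, List.forall_mem_cons]
    by_cases hnil : q.Nil
    · simp only [edges_eq_nil.mpr hnil, List.not_mem_nil, IsEmpty.forall_iff, implies_true,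
        and_true]
      rcases hsep x w h with ⟨hx, hw⟩ | ⟨hx, hw⟩
      exacts [.inl (hedge A hx hw), .inr (hedge B hx hw)]
    have hwK : w ∈ A → w ∉ B := fun hA hB =>
      (hint w (by simp) hA hB).elim h.ne.symm fun hwy => by
        subst hwy; exact hnil (isPath_iff_nil.mp hp.1)
    have hw : ∀ S : Set V, (∀ e ∈ q.edges, ∀ x ∈ e, x ∈ S) → w ∈ S :=
      fun S hS => mem_of_mem_support_of_forall_edges hnil hS q.start_mem_support
    rcases hsep x w h with ⟨hx, hw'⟩ | ⟨hx, hw'⟩ <;> rcases hq with hq | hq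
    · exact .inl ⟨hedge A hx hw', hq⟩
    · exact absurd (hw B hq) (hwK hw')
    · exact absurd hw' (hwK (hw A hq))
    · exact .inr ⟨hedge B hx hw', hq⟩

theorem IsCycle.exists_arcs_of_separation [DecidableEq V] {V₁ V₂ : Set V}
    (hsep : ∀ x y, G.Adj x y → (x ∈ V₁ ∧ y ∈ V₁) ∨ (x ∈ V₂ ∧ y ∈ V₂))
    {u a b : V} {c : G.Walk u u} (hc : c.IsCycle) (ha : a ∈ c.support) (hb : b ∈ c.support)
    (hab : a ≠ b) (hint : ∀ z ∈ c.support, z ∈ V₁ → z ∈ V₂ → z = a ∨ z = b)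
    (h₁ : ∃ x ∈ c.support, x ∉ V₂) (h₂ : ∃ x ∈ c.support, x ∉ V₁) :
    ∃ R₁ R₂ : G.Walk b a, R₁.IsPath ∧ R₂.IsPath ∧
      (∀ e ∈ R₁.edges, ∀ x ∈ e, x ∈ V₁) ∧ (∀ e ∈ R₂.edges, ∀ x ∈ e, x ∈ V₂) ∧
      (c.edges : Multiset (Sym2 V)) = R₁.edges + R₂.edges := by
  obtain ⟨p, q, hp, hq, hedges, hsupp⟩ := hc.exists_isPath_append ha hb hab
  have hpnil : ¬ p.Nil := not_nil_of_ne hab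
  have hqnil : ¬ q.Nil := not_nil_of_ne hab.symm
  have hside : ∀ S : Set V, (∀ e ∈ p.edges, ∀ x ∈ e, x ∈ S) →
      (∀ e ∈ q.edges, ∀ x ∈ e, x ∈ S) → ∀ x ∈ c.support, x ∈ S := fun S hpS hqS x hx =>
    ((hsupp x).mp hx).elim (mem_of_mem_support_of_forall_edges hpnil hpS)
      (mem_of_mem_support_of_forall_edges hqnil hqS)
  have hp' := hp.forall_edges_within_or hsep fun z hz => hint z ((hsupp z).mpr (.inl hz))
  have hq' := hq.forall_edges_within_or hsep fun z hz hz₁ hz₂ =>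
    (hint z ((hsupp z).mpr (.inr hz)) hz₁ hz₂).symm
  rcases hp' with hp₁ | hp₂ <;> rcases hq' with hq₁ | hq₂
  · obtain ⟨x, hx, hx₂⟩ := h₂
    exact absurd (hside V₁ hp₁ hq₁ x hx) hx₂
  · refine ⟨p.reverse, q, hp.reverse, hq, by simpa using hp₁, hq₂, ?_⟩
    rw [hedges, edges_reverse, Multiset.coe_reverse]
  · refine ⟨q, p.reverse, hq, hp.reverse, hq₁, by simpa using hp₂, ?_⟩
    rw [hedges, edges_reverse, Multiset.coe_reverse, add_comm]
  · obtain ⟨x, hx, hx₁⟩ := h₁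
    exact absurd (hside V₂ hp₂ hq₂ x hx) hx₁

theorem IsPath.exists_isCycle_add_virtual_edge {A : Set V} {a b c d : V}
    (hcd : s(c, d) = s(a, b)) (hab : a ≠ b) {R : G.Walk b a} (hR : R.IsPath)
    (hRA : ∀ e ∈ R.edges, ∀ x ∈ e, x ∈ A) (hRab : s(a, b) ∉ R.edges) :
    ∃ C : (fromRel fun x y => (G.Adj x y ∧ x ∈ A ∧ y ∈ A) ∨ (x = c ∧ y = d)).Walk a a,
      C.IsCycle ∧ C.edges = s(a, b) :: R.edges := by
  have hRr : ∀ e ∈ R.edges, e ∈ (fromRel fun x y =>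
      (G.Adj x y ∧ x ∈ A ∧ y ∈ A) ∨ (x = c ∧ y = d)).edgeSet := by
    intro e he
    induction e with
    | h x y =>
      have hxy : G.Adj x y := R.edges_subset_edgeSet he
      have hA := hRA _ he
      rw [SimpleGraph.mem_edgeSet, fromRel_adj]
      exact ⟨hxy.ne, .inl (.inl ⟨hxy, hA x (by simp), hA y (by simp)⟩)⟩
  have hvirt : (fromRel fun x y => (G.Adj x y ∧ x ∈ A ∧ y ∈ A) ∨ (x = c ∧ y = d)).Adj a b := by
    rcases Sym2.eq_iff.mp hcd with ⟨rfl, rfl⟩ | ⟨rfl, rfl⟩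
    exacts [(fromRel_adj _ _ _).mpr ⟨hab, .inl (.inr ⟨rfl, rfl⟩)⟩,
      (fromRel_adj _ _ _).mpr ⟨hab, .inr (.inr ⟨rfl, rfl⟩)⟩]
  refine ⟨cons hvirt (R.transfer _ hRr), ?_, by rw [edges_cons, edges_transfer]⟩
  rw [cons_isCycle_iff, edges_transfer]
  exact ⟨hR.transfer hRr, hRab⟩

end SimpleGraph.Walk

open Classical in
theorem stmt12_general {V : Type*} (G : SimpleGraph V) (V₁ V₂ : Set V)
    (hsep : ∀ x y, G.Adj x y → (x ∈ V₁ ∧ y ∈ V₁) ∨ (x ∈ V₂ ∧ y ∈ V₂))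
    (K : Set V) (hK : K = V₁ ∩ V₂)
    (a b : V) (haK : a ∈ K) (hbK : b ∈ K) (hab : a ≠ b)
    (u : V) (C : G.Walk u u) (hC : C.IsCycle)
    (hside₁ : ∃ x ∈ C.support, x ∈ V₁ \ K)
    (hside₂ : ∃ x ∈ C.support, x ∈ V₂ \ K)
    (hcross : {x | x ∈ C.support} ∩ K = {a, b})
    (hnoK : ∀ e ∈ C.edges, ¬ (∀ x ∈ e, x ∈ K)) :
    ∃ (C₁ : (SimpleGraph.fromRel (fun x y =>
        (G.Adj x y ∧ x ∈ V₁ ∧ y ∈ V₁) ∨ (x = a ∧ y = b))).Walk a a)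
      (C₂ : (SimpleGraph.fromRel (fun x y =>
        (G.Adj x y ∧ x ∈ V₂ ∧ y ∈ V₂) ∨ (x = b ∧ y = a))).Walk a a),
      C₁.IsCycle ∧ C₂.IsCycle ∧
      (C₁.edges : Multiset (Sym2 V)) =
        s(a, b) ::ₘ (C.edges : Multiset (Sym2 V)).filter (fun e => ∀ x ∈ e, x ∈ V₁) ∧
      (C₂.edges : Multiset (Sym2 V)) =
        s(b, a) ::ₘ (C.edges : Multiset (Sym2 V)).filter (fun e => ∀ x ∈ e, x ∈ V₂) ∧
      (∀ e ∈ C.edges,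
        ((∀ x ∈ e, x ∈ V₁) ∧ ¬ (∀ x ∈ e, x ∈ V₂)) ∨
        ((∀ x ∈ e, x ∈ V₂) ∧ ¬ (∀ x ∈ e, x ∈ V₁))) := by
  subst hK
  have hint : ∀ z ∈ C.support, z ∈ V₁ → z ∈ V₂ → z = a ∨ z = b := fun z hz hz₁ hz₂ => by
    simpa using hcross.le ⟨hz, hz₁, hz₂⟩
  have hcrossC : ∀ z ∈ ({a, b} : Set V), z ∈ C.support := fun z hz => (hcross.ge hz).1
  have hdisj : ∀ e ∈ C.edges, (∀ x ∈ e, x ∈ V₁) → ¬ ∀ x ∈ e, x ∈ V₂ :=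
    fun e he h₁ h₂ => hnoK e he fun x hx => ⟨h₁ x hx, h₂ x hx⟩
  have habC : s(a, b) ∉ C.edges := fun he => hnoK _ he (by simpa using And.intro haK hbK)
  obtain ⟨R₁, R₂, hR₁, hR₂, hR₁V, hR₂V, hCR⟩ := hC.exists_arcs_of_separation hsep
    (hcrossC a (by simp)) (hcrossC b (by simp)) hab hint
    (hside₁.imp fun _ ⟨hx, hx₁, hxK⟩ => ⟨hx, fun hx₂ => hxK ⟨hx₁, hx₂⟩⟩)
    (hside₂.imp fun _ ⟨hx, hx₂, hxK⟩ => ⟨hx, fun hx₁ => hxK ⟨hx₁, hx₂⟩⟩)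
  have hmemC : ∀ e, e ∈ C.edges ↔ e ∈ R₁.edges ∨ e ∈ R₂.edges := fun e => by
    rw [← Multiset.mem_coe, hCR, Multiset.mem_add, Multiset.mem_coe, Multiset.mem_coe]
  obtain ⟨C₁, hC₁, hC₁e⟩ := hR₁.exists_isCycle_add_virtual_edge rfl hab hR₁V
    fun h => habC ((hmemC _).mpr (.inl h))
  obtain ⟨C₂, hC₂, hC₂e⟩ := hR₂.exists_isCycle_add_virtual_edge Sym2.eq_swap hab hR₂V
    fun h => habC ((hmemC _).mpr (.inr h))
  refine ⟨C₁, C₂, hC₁, hC₂, ?_, ?_, fun e he => ?_⟩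
  · rw [hC₁e, ← Multiset.cons_coe, hCR, Multiset.filter_add_eq_left hR₁V fun e he h₁ =>
      hdisj e ((hmemC e).mpr (.inr he)) h₁ (hR₂V e he)]
  · rw [hC₂e, ← Multiset.cons_coe, hCR, add_comm, Sym2.eq_swap,
      Multiset.filter_add_eq_left hR₂V fun e he h₂ =>
        hdisj e ((hmemC e).mpr (.inl he)) (hR₁V e he) h₂]
  · rcases (hmemC e).mp he with h | h
    exacts [.inl ⟨hR₁V e h, hdisj e he (hR₁V e h)⟩,
      .inr ⟨hR₂V e h, fun h₁ => hdisj e he h₁ (hR₂V e h)⟩]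

open Classical in
theorem stmt12 {V : Type*} (G : SimpleGraph V) (V₁ V₂ : Set V)
    (hcover : V₁ ∪ V₂ = Set.univ)
    (hsep : ∀ x y, G.Adj x y → (x ∈ V₁ ∧ y ∈ V₁) ∨ (x ∈ V₂ ∧ y ∈ V₂))
    (K : Set V) (hK : K = V₁ ∩ V₂) (hKcard : Nat.card K ≤ 3)
    (a b : V) (haK : a ∈ K) (hbK : b ∈ K) (hab : a ≠ b)
    (u : V) (C : G.Walk u u) (hC : C.IsCycle)
    (hside₁ : ∃ x ∈ C.support, x ∈ V₁ \ K)
    (hside₂ : ∃ x ∈ C.support, x ∈ V₂ \ K)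
    (hcross : {x | x ∈ C.support} ∩ K = {a, b})
    (hnoK : ∀ e ∈ C.edges, ¬ (∀ x ∈ e, x ∈ K)) :
    ∃ (C₁ : (SimpleGraph.fromRel (fun x y =>
        (G.Adj x y ∧ x ∈ V₁ ∧ y ∈ V₁) ∨ (x = a ∧ y = b))).Walk a a)
      (C₂ : (SimpleGraph.fromRel (fun x y =>
        (G.Adj x y ∧ x ∈ V₂ ∧ y ∈ V₂) ∨ (x = b ∧ y = a))).Walk a a),
      C₁.IsCycle ∧ C₂.IsCycle ∧
      (C₁.edges : Multiset (Sym2 V)) =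
        s(a, b) ::ₘ (C.edges : Multiset (Sym2 V)).filter (fun e => ∀ x ∈ e, x ∈ V₁) ∧
      (C₂.edges : Multiset (Sym2 V)) =
        s(b, a) ::ₘ (C.edges : Multiset (Sym2 V)).filter (fun e => ∀ x ∈ e, x ∈ V₂) ∧
      (∀ e ∈ C.edges,
        ((∀ x ∈ e, x ∈ V₁) ∧ ¬ (∀ x ∈ e, x ∈ V₂)) ∨
        ((∀ x ∈ e, x ∈ V₂) ∧ ¬ (∀ x ∈ e, x ∈ V₁))) :=
  stmt12_general G V₁ V₂ hsep K hK a b haK hbK hab u C hC hside₁ hside₂ hcross hnoK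
end

section
/- Consider the recursive decomposition of a rooted tree S using components of the form S_{v,v'} := S_v \ S_{v'} (subtree at v minus subtree at a descendant v'). Case (ii) center rule: if v' is a node, let (u_0=v, u_1, ..., u_p=v') be the path from v to v', and let i be the least index with |S_{u_{i+1},v'}| ≤ (1/2)|S_{v,v'}|; take u_i as center. Then after removing u_i from S_{v,v'}, the component S_{v,u_i} satisfies |S_{v,u_i}| ≤ (1/2)|S_{v,v'}|, and every other resulting component is of the form S_c (a full subtree) for some child c of u_i. -/
/-!
Since `S_{v'} ⊆ S_{u_i} ⊆ S_v`, the set `S_{v,v'}` is the disjoint union of `S_{v,u_i}` and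
`S_{u_i,v'}`; minimality of `i` makes the second part more than half of `S_{v,v'}`, so the first
is at most half. A vertex of `S_{u_i}` other than `u_i` lies in the subtree of the child of `u_i`
on its way up, which is either `u_{i+1}` or another child.
-/

theorem two_mul_natCard_diff_le_of_lt_two_mul {α : Type*} {A B C : Set α} (hA : A.Finite)
    (hCB : C ⊆ B) (hBA : B ⊆ A) (h : Nat.card ↥(A \ C) < 2 * Nat.card ↥(B \ C)) :
    2 * Nat.card ↥(A \ B) ≤ Nat.card ↥(A \ C) := by
  have hB : B.Finite := hA.subset hBA
  have hC : C.Finite := hB.subset hCB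
  simp only [Nat.card_coe_set_eq] at h ⊢
  rw [Set.ncard_sdiff hCB hC, Set.ncard_sdiff (hCB.trans hBA) hC] at h
  rw [Set.ncard_sdiff hBA hB, Set.ncard_sdiff (hCB.trans hBA) hC]
  have := Set.ncard_le_ncard hCB hB
  have := Set.ncard_le_ncard hBA hA
  omega

section subtree

variable {V : Type*} (p : V → V)

def subtree (v : V) : Set V := {x | ∃ k, p^[k] x = v}

variable {p}

theorem subtree_subset_of_iterate_eq {a b : V} {m : ℕ} (h : p^[m] a = b) :
    subtree p a ⊆ subtree p b := by
  rintro x ⟨k, hk⟩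
  exact ⟨m + k, by rw [Function.iterate_add_apply, hk, h]⟩

theorem exists_child_mem_subtree {x w : V} (hx : x ∈ subtree p w) (hxw : x ≠ w) :
    ∃ c, p c = w ∧ c ≠ w ∧ x ∈ subtree p c := by
  classical
  have hk : Nat.find hx ≠ 0 := fun h ↦ hxw (by simpa [h] using Nat.find_spec hx)
  refine ⟨p^[Nat.find hx - 1] x, ?_, Nat.find_min hx (by omega), _, rfl⟩
  rw [← Function.iterate_succ_apply' p, Nat.succ_eq_add_one, Nat.sub_add_cancel
    (Nat.pos_of_ne_zero hk)]
  exact Nat.find_spec hx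

end subtree

theorem stmt18_general {V : Type*} [Fintype V] (p : V → V)
    (v v' : V) (q : ℕ) (hdesc : p^[q] v' = v)
    (u : ℕ → V) (hu : ∀ j, u j = p^[q - j] v')
    (i : ℕ) (hi : i < q)
    (hmin : ∀ j < i,
      ¬ (2 * Nat.card (({x | ∃ k, p^[k] x = u (j + 1)} \ {x | ∃ k, p^[k] x = v'} : Set V)) ≤
        Nat.card (({x | ∃ k, p^[k] x = v} \ {x | ∃ k, p^[k] x = v'} : Set V)))) :
    2 * Nat.card (({x | ∃ k, p^[k] x = v} \ {x | ∃ k, p^[k] x = u i} : Set V)) ≤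
        Nat.card (({x | ∃ k, p^[k] x = v} \ {x | ∃ k, p^[k] x = v'} : Set V)) ∧
    ∀ x ∈ (({x | ∃ k, p^[k] x = v} \ {x | ∃ k, p^[k] x = v'} : Set V)), x ≠ u i →
      x ∈ (({x | ∃ k, p^[k] x = v} \ {x | ∃ k, p^[k] x = u i} : Set V)) ∨
      x ∈ (({x | ∃ k, p^[k] x = u (i + 1)} \ {x | ∃ k, p^[k] x = v'} : Set V)) ∨
      ∃ c, p c = u i ∧ c ≠ u i ∧ c ≠ u (i + 1) ∧ ∃ k, p^[k] x = c := by
  have hv'_ui : p^[q - i] v' = u i := (hu i).symm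
  have hui_v : p^[i] (u i) = v := by
    rw [← hv'_ui, ← Function.iterate_add_apply, Nat.add_sub_cancel' hi.le, hdesc]
  refine ⟨?_, ?_⟩
  · rcases Nat.eq_zero_or_pos i with rfl | hpos
    · have hu0 : u 0 = v := by rw [hu, Nat.sub_zero, hdesc]
      simp [hu0]
    · have hhalf := hmin (i - 1) (by omega)
      rw [Nat.sub_add_cancel hpos] at hhalf
      exact two_mul_natCard_diff_le_of_lt_two_mul (Set.toFinite _)
        (subtree_subset_of_iterate_eq hv'_ui) (subtree_subset_of_iterate_eq hui_v)
        (not_le.mp hhalf)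
  · rintro x ⟨hxv, hxv'⟩ hxui
    by_cases hx : x ∈ subtree p (u i)
    · obtain ⟨c, hpc, hcui, hxc⟩ := exists_child_mem_subtree hx hxui
      rcases eq_or_ne c (u (i + 1)) with rfl | hc
      · exact Or.inr (Or.inl ⟨hxc, hxv'⟩)
      · exact Or.inr (Or.inr ⟨c, hpc, hcui, hc, hxc⟩)
    · exact Or.inl ⟨hxv, hx⟩

theorem stmt18 {V : Type*} [Fintype V] (p : V → V) (r : V)
    (hroot : p r = r) (hreach : ∀ x, ∃ k, p^[k] x = r)
    (v v' : V) (q : ℕ) (hq : 0 < q) (hdesc : p^[q] v' = v)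
    (u : ℕ → V) (hu : ∀ j, u j = p^[q - j] v')
    (i : ℕ) (hi : i < q)
    (hleast : 2 * Nat.card (({x | ∃ k, p^[k] x = u (i + 1)} \ {x | ∃ k, p^[k] x = v'} : Set V)) ≤
        Nat.card (({x | ∃ k, p^[k] x = v} \ {x | ∃ k, p^[k] x = v'} : Set V)))
    (hmin : ∀ j < i,
      ¬ (2 * Nat.card (({x | ∃ k, p^[k] x = u (j + 1)} \ {x | ∃ k, p^[k] x = v'} : Set V)) ≤
        Nat.card (({x | ∃ k, p^[k] x = v} \ {x | ∃ k, p^[k] x = v'} : Set V)))) :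
    2 * Nat.card (({x | ∃ k, p^[k] x = v} \ {x | ∃ k, p^[k] x = u i} : Set V)) ≤
        Nat.card (({x | ∃ k, p^[k] x = v} \ {x | ∃ k, p^[k] x = v'} : Set V)) ∧
    ∀ x ∈ (({x | ∃ k, p^[k] x = v} \ {x | ∃ k, p^[k] x = v'} : Set V)), x ≠ u i →
      x ∈ (({x | ∃ k, p^[k] x = v} \ {x | ∃ k, p^[k] x = u i} : Set V)) ∨
      x ∈ (({x | ∃ k, p^[k] x = u (i + 1)} \ {x | ∃ k, p^[k] x = v'} : Set V)) ∨
      ∃ c, p c = u i ∧ c ≠ u i ∧ c ≠ u (i + 1) ∧ ∃ k, p^[k] x = c :=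
  stmt18_general p v v' q hdesc u hu i hi hmin
end
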